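/- Under the assumptions that Q(0) has absorbing states 𝒜 and transient states 𝒯, and that the Q-matrix Q_𝒜 = A₁ + S₁(−T₀)⁻¹R₀ has a single recurrent class, the vector α with π(0) = [α, 0] is the unique probability vector on 𝒜 satisfying α Q_𝒜 = 0. -/

import Mathlib

/-!
For `ε > 0` the stationary vector `π ε` lies in the compact standard simplex, so it suffices to
identify its cluster points as `ε → 0⁺`. Write `Q(ε) = Q₀ + ε D(ε)` with `D(ε) → Q₁`. Passing to
the limit in `π(ε) Q(ε) = 0` along a cluster point `v` gives `v Q₀ = 0`, and since the rows of
`Q₀` indexed by `𝒜` vanish, `v_𝒯 T₀ = 0`, so `v_𝒯 = 0`. Dividing the `𝒯`-columns of the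
equation by `ε` shows `π_𝒯(ε)/ε → v_𝒜 S₁ (-T₀)⁻¹`, and then the `𝒜`-columns divided by `ε` give
`v_𝒜 (A₁ + S₁ (-T₀)⁻¹ R₀) = 0`. Finally `Q_𝒜` is itself a Q-matrix (`(-T₀)⁻¹ ≥ 0` by a minimum
principle), and a Q-matrix with a single recurrent class has a one-dimensional left null space,
so all cluster points coincide.
-/

open Matrix Filter Topology

/-- The matrix `Q_𝒜 = A₁ + S₁ (−T₀)⁻¹ R₀`. -/
noncomputable def QAmat {A T : Type*} [Fintype T] [DecidableEq T]
    (Q0 Q1 : Matrix (A ⊕ T) (A ⊕ T) ℝ) : Matrix A A ℝ :=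
  Q1.toBlocks₁₁ + Q1.toBlocks₁₂ * (-Q0.toBlocks₂₂)⁻¹ * Q0.toBlocks₂₁

def LeadsTo {V : Type*} (M : Matrix V V ℝ) (x y : V) : Prop :=
  Relation.ReflTransGen (fun a b => 0 < M a b) x y

/-- A recurrent class: a nonempty closed communicating class. -/
def IsRecurrentClass {V : Type*} (M : Matrix V V ℝ) (C : Set V) : Prop :=
  C.Nonempty ∧ (∀ x ∈ C, ∀ y ∈ C, LeadsTo M x y) ∧ (∀ x ∈ C, ∀ y, LeadsTo M x y → y ∈ C)

lemma Filter.Tendsto.matrix_vecMul {ι m n R : Type*} [Fintype m] [TopologicalSpace R]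
    [NonUnitalNonAssocSemiring R] [IsTopologicalSemiring R] {F : Filter ι}
    {x : ι → m → R} {M : ι → Matrix m n R} {x₀ : m → R} {M₀ : Matrix m n R}
    (hx : Tendsto x F (𝓝 x₀)) (hM : Tendsto M F (𝓝 M₀)) :
    Tendsto (fun i => x i ᵥ* M i) F (𝓝 (x₀ ᵥ* M₀)) :=
  ((continuous_fst.matrix_vecMul continuous_snd).tendsto (x₀, M₀)).comp (hx.prodMk_nhds hM)

lemma Filter.Tendsto.precomp {ι α β X : Type*} [TopologicalSpace X] {F : Filter ι}
    {f : ι → β → X} {g : β → X} (h : Tendsto f F (𝓝 g)) (e : α → β) :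
    Tendsto (fun i => f i ∘ e) F (𝓝 (g ∘ e)) :=
  ((Pi.continuous_precomp e).tendsto g).comp h

lemma Matrix.vecMul_comp_inl {l m n o R : Type*} [Fintype n] [Fintype o]
    [NonUnitalNonAssocSemiring R] (x : n ⊕ o → R) (M : Matrix (n ⊕ o) (l ⊕ m) R) :
    (x ᵥ* M) ∘ Sum.inl = (x ∘ Sum.inl) ᵥ* M.toBlocks₁₁ + (x ∘ Sum.inr) ᵥ* M.toBlocks₂₁ := by
  conv_lhs => rw [← fromBlocks_toBlocks M, vecMul_fromBlocks]
  rfl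

lemma Matrix.vecMul_comp_inr {l m n o R : Type*} [Fintype n] [Fintype o]
    [NonUnitalNonAssocSemiring R] (x : n ⊕ o → R) (M : Matrix (n ⊕ o) (l ⊕ m) R) :
    (x ᵥ* M) ∘ Sum.inr = (x ∘ Sum.inl) ᵥ* M.toBlocks₁₂ + (x ∘ Sum.inr) ᵥ* M.toBlocks₂₂ := by
  conv_lhs => rw [← fromBlocks_toBlocks M, vecMul_fromBlocks]
  rfl

/-- The series has positive radius of convergence, so it defines an analytic function near `0`
whose derivative at `0` is `c 1`. -/
lemma tendsto_slope_of_hasSum_pow {c : ℕ → ℝ} {f : ℝ → ℝ} {ε₀ : ℝ} (hε₀ : 0 < ε₀)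
    (hf : ∀ ε, 0 ≤ ε → ε < ε₀ → HasSum (fun k => ε ^ k * c k) (f ε)) :
    Tendsto (fun ε => ε⁻¹ * (f ε - f 0)) (𝓝[>] 0) (𝓝 (c 1)) := by
  set p := FormalMultilinearSeries.ofScalars ℝ c
  have hp_apply : ∀ n ε, p n (fun _ => ε) = ε ^ n * c n := fun n ε => by
    rw [FormalMultilinearSeries.ofScalars_apply_eq, smul_eq_mul, mul_comm]
  set r : NNReal := ⟨ε₀ / 2, by positivity⟩
  have hr0 : (0 : ℝ) < r := half_pos hε₀
  have hr : (r : ℝ) < ε₀ := half_lt_self hε₀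
  have hradius : (r : ENNReal) ≤ p.radius := by
    refine p.le_radius_of_tendsto (l := 0) ?_
    simpa [p, norm_mul, mul_comm] using (hf r r.2 hr).summable.tendsto_atTop_zero.norm
  have hp := p.hasFPowerSeriesOnBall ((ENNReal.coe_pos.2 hr0).trans_le hradius)
  have hsum_eq : ∀ ε : ℝ, 0 ≤ ε → ε < r → p.sum ε = f ε := by
    intro ε h0 h1
    have hball : ε ∈ Metric.eball (0 : ℝ) p.radius := by
      refine lt_of_lt_of_le ?_ hradius
      rw [edist_zero_right, Real.enorm_of_nonneg h0]
      exact (ENNReal.ofReal_lt_iff_lt_toReal h0 ENNReal.coe_ne_top).2 h1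
    have hsum := hp.hasSum hball
    simp only [hp_apply, zero_add] at hsum
    exact hsum.unique (hf ε h0 (h1.trans hr))
  have hderiv : HasDerivAt p.sum (c 1) 0 := by
    simpa [hp_apply] using hp.hasFPowerSeriesAt.hasDerivAt
  refine hderiv.tendsto_slope_zero_right.congr' ?_
  filter_upwards [Ioo_mem_nhdsGT hr0] with ε hε
  rw [zero_add, smul_eq_mul, hsum_eq ε hε.1.le hε.2, hsum_eq 0 le_rfl hr0]

lemma tendsto_slope_of_hasSum_pow_matrix {m n : Type*} {Q : ℝ → Matrix m n ℝ}
    {Qk : ℕ → Matrix m n ℝ} {ε₀ : ℝ} (hε₀ : 0 < ε₀)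
    (hQ : ∀ ε, 0 ≤ ε → ε < ε₀ → ∀ x y, HasSum (fun k => ε ^ k * Qk k x y) (Q ε x y)) :
    Tendsto (fun ε => ε⁻¹ • (Q ε - Q 0)) (𝓝[>] 0) (𝓝 (Qk 1)) :=
  tendsto_pi_nhds.2 fun x => tendsto_pi_nhds.2 fun y =>
    tendsto_slope_of_hasSum_pow hε₀ fun ε h0 h1 => hQ ε h0 h1 x y

section Slope
variable {V : Type*} {Q : ℝ → Matrix V V ℝ} {Q1 : Matrix V V ℝ}

lemma nonneg_of_tendsto_slope {x y : V} (hQ : ∀ᶠ ε in 𝓝[>] 0, 0 ≤ Q ε x y) (h0 : Q 0 x y = 0)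
    (hD : Tendsto (fun ε => ε⁻¹ • (Q ε - Q 0)) (𝓝[>] 0) (𝓝 Q1)) : 0 ≤ Q1 x y := by
  refine ge_of_tendsto (tendsto_pi_nhds.1 (tendsto_pi_nhds.1 hD x) y) ?_
  filter_upwards [hQ, self_mem_nhdsWithin] with ε hε (hε0 : 0 < ε)
  simpa [h0] using mul_nonneg (inv_nonneg.2 hε0.le) hε

lemma sum_row_eq_zero_of_tendsto_slope [Fintype V] {x : V}
    (hQ : ∀ᶠ ε in 𝓝[>] 0, ∑ y, Q ε x y = 0) (h0 : ∑ y, Q 0 x y = 0)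
    (hD : Tendsto (fun ε => ε⁻¹ • (Q ε - Q 0)) (𝓝[>] 0) (𝓝 Q1)) : ∑ y, Q1 x y = 0 := by
  refine tendsto_nhds_unique
    (tendsto_finsetSum _ fun y _ => tendsto_pi_nhds.1 (tendsto_pi_nhds.1 hD x) y) ?_
  refine tendsto_const_nhds.congr' ?_
  filter_upwards [hQ] with ε hε
  simp [← Finset.mul_sum, Finset.sum_sub_distrib, hε, h0]

end Slope

structure IsQMatrix {V : Type*} [Fintype V] (M : Matrix V V ℝ) : Prop where
  nonneg_of_ne : ∀ x y, x ≠ y → 0 ≤ M x y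
  sum_row_eq_zero : ∀ x, ∑ y, M x y = 0

namespace IsQMatrix
variable {V : Type*} [Fintype V] {M : Matrix V V ℝ}

lemma mulVec_apply_eq_sum_sub (hM : IsQMatrix M) (f : V → ℝ) (x : V) :
    (M *ᵥ f) x = ∑ y, M x y * (f y - f x) := by
  simp only [mulVec, dotProduct, mul_sub, Finset.sum_sub_distrib, ← Finset.sum_mul,
    hM.sum_row_eq_zero, zero_mul, sub_zero]

lemma apply_eq_of_forall_le (hM : IsQMatrix M) {f : V → ℝ} {x y : V} (hmin : ∀ z, f x ≤ f z)
    (hx : (M *ᵥ f) x ≤ 0) (hxy : 0 < M x y) : f y = f x := by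
  have hterm : ∀ z ∈ Finset.univ, 0 ≤ M x z * (f z - f x) := fun z _ => by
    rcases eq_or_ne x z with rfl | hne
    · simp
    · exact mul_nonneg (hM.nonneg_of_ne x z hne) (sub_nonneg.2 (hmin z))
  have hsum : ∑ z, M x z * (f z - f x) = 0 :=
    le_antisymm (hM.mulVec_apply_eq_sum_sub f x ▸ hx) (Finset.sum_nonneg hterm)
  have hxy0 := (Finset.sum_eq_zero_iff_of_nonneg hterm).1 hsum y (Finset.mem_univ y)
  linarith [(mul_eq_zero.1 hxy0).resolve_left hxy.ne']

/-- Minimum principle: a negative minimum of `f` would propagate along every path into `S`. -/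
lemma nonneg_of_mulVec_nonpos (hM : IsQMatrix M) {f : V → ℝ} {S : Set V}
    (hS : ∀ x ∈ S, 0 ≤ f x) (hf : ∀ x ∉ S, (M *ᵥ f) x ≤ 0)
    (hreach : ∀ x, ∃ y ∈ S, LeadsTo M x y) (x : V) : 0 ≤ f x := by
  by_contra! hx
  have : Nonempty V := ⟨x⟩
  obtain ⟨x₀, hx₀⟩ := Finite.exists_min f
  have hnotS : ∀ y, f y = f x₀ → y ∉ S := fun y hy hyS =>
    (hS y hyS).not_gt (hy ▸ (hx₀ x).trans_lt hx)
  have hconst : ∀ y, LeadsTo M x₀ y → f y = f x₀ := by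
    intro y hy
    induction hy with
    | refl => rfl
    | tail _ hbc ih =>
      exact (hM.apply_eq_of_forall_le (fun z => ih ▸ hx₀ z) (hf _ (hnotS _ ih)) hbc).trans ih
  obtain ⟨y, hyS, hy⟩ := hreach x₀
  exact hnotS y (hconst y hy) hyS

end IsQMatrix

section RecurrentClass
variable {V : Type*} {M : Matrix V V ℝ}

lemma LeadsTo.mem_of_closed {S : Set V} (hS : ∀ x ∈ S, ∀ y, 0 < M x y → y ∈ S) {x y : V}
    (hx : x ∈ S) (hxy : LeadsTo M x y) : y ∈ S := by
  induction hxy with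
  | refl => exact hx
  | tail _ hbc ih => exact hS _ ih _ hbc

/-- A point of `S` whose reachable set is minimal generates a recurrent class. -/
lemma exists_isRecurrentClass_subset [Finite V] {S : Set V} (hne : S.Nonempty)
    (hS : ∀ x ∈ S, ∀ y, 0 < M x y → y ∈ S) : ∃ C ⊆ S, IsRecurrentClass M C := by
  let reach : V → Set V := fun x => {y | LeadsTo M x y}
  obtain ⟨z, hzS, hzmin⟩ := S.toFinite.exists_minimalFor reach S hne
  have hreach_sub : ∀ x ∈ reach z, reach x ⊆ reach z := fun _ hx _ hy => hx.trans hy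
  refine ⟨reach z, fun y hy => LeadsTo.mem_of_closed hS hzS hy,
    ⟨z, Relation.ReflTransGen.refl⟩, fun x hx y hy => ?_, fun x hx y hxy => hreach_sub x hx hxy⟩
  have hxz : z ∈ reach x :=
    hzmin (LeadsTo.mem_of_closed hS hzS hx) (hreach_sub x hx) Relation.ReflTransGen.refl
  exact Relation.ReflTransGen.trans hxz hy

namespace IsQMatrix
variable [Fintype V]

/-- Write `S = {δ > 0}`. The total flow `∑ z, δ z * ∑ w ∈ S, M z w` into `S` vanishes, and each
of its terms is nonpositive; so no positive rate leaves `S`. -/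
lemma pos_of_vecMul_eq_zero (hM : IsQMatrix M) {δ : V → ℝ} (hδ : δ ᵥ* M = 0) {x y : V}
    (hx : 0 < δ x) (hxy : 0 < M x y) : 0 < δ y := by
  classical
  by_contra! hy
  set S := Finset.univ.filter fun z => 0 < δ z
  have hout : ∀ z, ∑ w ∈ S, M z w = -∑ w ∈ Finset.univ.filter (fun w => δ w ≤ 0), M z w := by
    intro z
    have hsplit := Finset.sum_filter_add_sum_filter_not Finset.univ (fun w => 0 < δ w) (M z)
    simp only [not_lt] at hsplit
    linarith [hM.sum_row_eq_zero z]
  have hflow : ∑ z, δ z * ∑ w ∈ S, M z w = 0 := by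
    simp_rw [Finset.mul_sum]
    rw [Finset.sum_comm]
    exact Finset.sum_eq_zero fun w _ => congrFun hδ w
  have hterm : ∀ z ∈ Finset.univ, δ z * ∑ w ∈ S, M z w ≤ 0 := by
    intro z _
    by_cases hz : 0 < δ z
    · rw [hout]
      refine mul_nonpos_of_nonneg_of_nonpos hz.le (neg_nonpos.2 (Finset.sum_nonneg fun w hw => ?_))
      exact hM.nonneg_of_ne z w (ne_of_apply_ne δ (hz.trans_le' (Finset.mem_filter.1 hw).2).ne')
    · refine mul_nonpos_of_nonpos_of_nonneg (not_lt.1 hz) (Finset.sum_nonneg fun w hw => ?_)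
      have hw : 0 < δ w := (Finset.mem_filter.1 hw).2
      exact hM.nonneg_of_ne z w (ne_of_apply_ne δ (hw.trans_le' (not_lt.1 hz)).ne)
  have hx0 := (Finset.sum_eq_zero_iff_of_nonpos hterm).1 hflow x (Finset.mem_univ x)
  rw [hout, mul_neg, neg_eq_zero] at hx0
  have hxw : ∀ w ∈ Finset.univ.filter (fun w => δ w ≤ 0), 0 ≤ M x w := fun w hw =>
    hM.nonneg_of_ne x w (ne_of_apply_ne δ (hx.trans_le' (Finset.mem_filter.1 hw).2).ne')
  exact hxy.ne' ((Finset.sum_eq_zero_iff_of_nonneg hxw).1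
    ((mul_eq_zero.1 hx0).resolve_left hx.ne') y (by simpa using hy))

lemma exists_isRecurrentClass_pos (hM : IsQMatrix M) {δ : V → ℝ} (hδ : δ ᵥ* M = 0)
    (hsum : ∑ x, δ x = 0) (hne : δ ≠ 0) : ∃ C ⊆ {x | 0 < δ x}, IsRecurrentClass M C := by
  obtain ⟨x, -, hx⟩ := Finset.exists_pos_of_sum_zero_of_exists_nonzero δ hsum
    (by simpa [funext_iff] using hne)
  exact exists_isRecurrentClass_subset ⟨x, hx⟩ fun _ hz _ hzy => hM.pos_of_vecMul_eq_zero hδ hz hzy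

/-- The positive parts of `α - β` and of `β - α` would each contain a recurrent class. -/
lemma eq_of_vecMul_eq_zero (hM : IsQMatrix M) (hrec : ∃! C : Set V, IsRecurrentClass M C)
    {α β : V → ℝ} (hα : α ᵥ* M = 0) (hβ : β ᵥ* M = 0) (hsum : ∑ x, α x = ∑ x, β x) :
    α = β := by
  by_contra hne
  obtain ⟨C, hCpos, hC⟩ := hM.exists_isRecurrentClass_pos (δ := α - β)
    (by rw [sub_vecMul, hα, hβ, sub_zero]) (by simp [Finset.sum_sub_distrib, hsum])
    (sub_ne_zero.2 hne)
  obtain ⟨C', hCneg, hC'⟩ := hM.exists_isRecurrentClass_pos (δ := β - α)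
    (by rw [sub_vecMul, hα, hβ, sub_zero]) (by simp [Finset.sum_sub_distrib, hsum])
    (sub_ne_zero.2 (Ne.symm hne))
  obtain ⟨x, hx⟩ := hC.1
  have hpos : 0 < (α - β) x := hCpos hx
  have hneg : 0 < (β - α) x := hCneg (hrec.unique hC hC' ▸ hx)
  simp only [Pi.sub_apply, sub_pos] at hpos hneg
  exact hpos.not_gt hneg

end IsQMatrix
end RecurrentClass

section Reduction
variable {A T : Type*} [Fintype A] [Fintype T] [DecidableEq T]
  {Q0 Q1 : Matrix (A ⊕ T) (A ⊕ T) ℝ}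

/-- Each column `x` of `(-T₀)⁻¹` solves `T₀ x = -eₛ ≤ 0`; extended by `0` on `𝒜` it is
nonnegative by the minimum principle, since every transient state reaches `𝒜`. -/
lemma inv_neg_toBlocks₂₂_nonneg (hQ0 : IsQMatrix Q0)
    (hreach : ∀ t, ∃ a, LeadsTo Q0 (Sum.inr t) (Sum.inl a)) (hT0 : IsUnit Q0.toBlocks₂₂)
    (t s : T) : 0 ≤ (-Q0.toBlocks₂₂)⁻¹ t s := by
  set N := -Q0.toBlocks₂₂
  have hN : IsUnit N.det := (isUnit_iff_isUnit_det _).1 hT0.neg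
  set x : T → ℝ := fun u => N⁻¹ u s
  have hx : N *ᵥ x = fun u => (1 : Matrix T T ℝ) u s := by
    funext u
    rw [← mul_nonsing_inv N hN]
    rfl
  refine hQ0.nonneg_of_mulVec_nonpos (f := Sum.elim 0 x) (S := Set.range Sum.inl) ?_ ?_ ?_
    (Sum.inr t)
  · rintro _ ⟨a, rfl⟩
    rfl
  · rintro (a | u) hu
    · exact absurd ⟨a, rfl⟩ hu
    · have h : (Q0 *ᵥ Sum.elim 0 x) (Sum.inr u) = -(N *ᵥ x) u := by
        simp [N, mulVec, dotProduct, Fintype.sum_sum_type, toBlocks₂₂]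
      rw [h, hx, neg_nonpos]
      exact zero_le_one_elem (α := ℝ) u s
  · rintro (a | u)
    · exact ⟨_, ⟨a, rfl⟩, Relation.ReflTransGen.refl⟩
    · obtain ⟨a, ha⟩ := hreach u
      exact ⟨_, ⟨a, rfl⟩, ha⟩

lemma isQMatrix_QAmat (hQ0 : IsQMatrix Q0)
    (hreach : ∀ t, ∃ a, LeadsTo Q0 (Sum.inr t) (Sum.inl a)) (hT0 : IsUnit Q0.toBlocks₂₂)
    (hQ1 : ∀ a y, Sum.inl a ≠ y → 0 ≤ Q1 (Sum.inl a) y)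
    (hQ1row : ∀ a, ∑ y, Q1 (Sum.inl a) y = 0) : IsQMatrix (QAmat Q0 Q1) where
  nonneg_of_ne a b hab := by
    refine add_nonneg (hQ1 a _ (Sum.inl_injective.ne hab)) ?_
    simp only [mul_apply]
    refine Finset.sum_nonneg fun s _ => mul_nonneg (Finset.sum_nonneg fun u _ => ?_) ?_
    · exact mul_nonneg (hQ1 a _ Sum.inl_ne_inr) (inv_neg_toBlocks₂₂_nonneg hQ0 hreach hT0 u s)
    · exact hQ0.nonneg_of_ne _ _ Sum.inr_ne_inl
  sum_row_eq_zero a := by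
    have hR0 : Q0.toBlocks₂₁ *ᵥ 1 = (-Q0.toBlocks₂₂) *ᵥ 1 := by
      funext t
      have h := hQ0.sum_row_eq_zero (Sum.inr t)
      simp only [Fintype.sum_sum_type] at h
      simp [mulVec, dotProduct, toBlocks₂₁, toBlocks₂₂]
      linarith
    have h : QAmat Q0 Q1 *ᵥ 1 = Q1.toBlocks₁₁ *ᵥ 1 + Q1.toBlocks₁₂ *ᵥ 1 := by
      rw [QAmat, add_mulVec, ← mulVec_mulVec, hR0, mulVec_mulVec, Matrix.mul_assoc,
        nonsing_inv_mul _ ((isUnit_iff_isUnit_det _).1 hT0.neg), Matrix.mul_one]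
    have := congrFun h a
    simp only [mulVec, dotProduct, mul_one, Pi.add_apply, Pi.one_apply] at this
    rw [this, ← hQ1row a, Fintype.sum_sum_type]
    rfl

end Reduction

lemma blocks_eq_of_vecMul_perturbed_eq_zero {A T : Type*} [Fintype A] [Fintype T]
    {Q0 : Matrix (A ⊕ T) (A ⊕ T) ℝ} (habs : ∀ a y, Q0 (Sum.inl a) y = 0)
    {p : A ⊕ T → ℝ} {ε : ℝ} {D : Matrix (A ⊕ T) (A ⊕ T) ℝ} (h : p ᵥ* (Q0 + ε • D) = 0) :
    (p ∘ Sum.inr) ᵥ* Q0.toBlocks₂₁ = -ε • ((p ᵥ* D) ∘ Sum.inl) ∧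
      (p ∘ Sum.inr) ᵥ* (-Q0.toBlocks₂₂) = ε • ((p ᵥ* D) ∘ Sum.inr) := by
  have h11 : Q0.toBlocks₁₁ = 0 := by ext a b; exact habs a _
  have h12 : Q0.toBlocks₁₂ = 0 := by ext a b; exact habs a _
  rw [vecMul_add, vecMul_smul, add_eq_zero_iff_eq_neg] at h
  have hinl := congrArg (· ∘ Sum.inl) h
  have hinr := congrArg (· ∘ Sum.inr) h
  rw [vecMul_comp_inl, h11, vecMul_zero, zero_add] at hinl
  rw [vecMul_comp_inr, h12, vecMul_zero, zero_add] at hinr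
  refine ⟨hinl.trans ?_, by rw [vecMul_neg, hinr]; ext; simp⟩
  ext; simp

section Perturbation
variable {A T : Type*} [Fintype A] [Fintype T] [DecidableEq T]

/-- The `𝒯`-part of `p ε` is `O(ε)`: `ε⁻¹ (p ε ∘ Sum.inr) → (v ∘ Sum.inl) S₁ (-T₀)⁻¹`. -/
theorem stationary_of_tendsto_perturbed {Q0 Q1 : Matrix (A ⊕ T) (A ⊕ T) ℝ}
    (habs : ∀ a y, Q0 (Sum.inl a) y = 0)
    (hT0 : IsUnit Q0.toBlocks₂₂) {F : Filter ℝ} [F.NeBot] (hF : F ≤ 𝓝[>] 0)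
    {p : ℝ → A ⊕ T → ℝ} {D : ℝ → Matrix (A ⊕ T) (A ⊕ T) ℝ} {v : A ⊕ T → ℝ}
    (hp : Tendsto p F (𝓝 v)) (hD : Tendsto D F (𝓝 Q1))
    (hstat : ∀ᶠ ε in F, p ε ᵥ* (Q0 + ε • D ε) = 0) :
    v ∘ Sum.inr = 0 ∧ (v ∘ Sum.inl) ᵥ* QAmat Q0 Q1 = 0 := by
  set N := -Q0.toBlocks₂₂
  have hN : IsUnit N := hT0.neg
  have hNdet : IsUnit N.det := (isUnit_iff_isUnit_det _).1 hN
  have hε : Tendsto (fun ε : ℝ => ε) F (𝓝 0) := tendsto_id.mono_left (hF.trans nhdsWithin_le_nhds)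
  have hε0 : ∀ᶠ ε in F, ε ≠ 0 := hF (eventually_mem_nhdsWithin.mono fun _ h => ne_of_gt h)
  have hw := hp.matrix_vecMul hD
  have hblocks := hstat.mono fun _ => blocks_eq_of_vecMul_perturbed_eq_zero habs
  have hvT : v ∘ Sum.inr = 0 := by
    refine vecMul_injective_of_isUnit hN ?_
    change (v ∘ Sum.inr) ᵥ* N = 0 ᵥ* N
    rw [zero_vecMul]
    refine tendsto_nhds_unique ((hp.precomp Sum.inr).matrix_vecMul tendsto_const_nhds) ?_
    have := hε.smul (hw.precomp Sum.inr)
    rw [zero_smul] at this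
    exact this.congr' (hblocks.mono fun ε h => h.2.symm)
  have hQ1inl : (v ᵥ* Q1) ∘ Sum.inl = (v ∘ Sum.inl) ᵥ* Q1.toBlocks₁₁ := by
    rw [vecMul_comp_inl, hvT, zero_vecMul, add_zero]
  have hQ1inr : (v ᵥ* Q1) ∘ Sum.inr = (v ∘ Sum.inl) ᵥ* Q1.toBlocks₁₂ := by
    rw [vecMul_comp_inr, hvT, zero_vecMul, add_zero]
  have hβ : Tendsto (fun ε => ε⁻¹ • (p ε ∘ Sum.inr)) F
      (𝓝 (((v ∘ Sum.inl) ᵥ* Q1.toBlocks₁₂) ᵥ* N⁻¹)) := by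
    rw [← hQ1inr]
    refine ((hw.precomp Sum.inr).matrix_vecMul tendsto_const_nhds).congr' ?_
    filter_upwards [hblocks, hε0] with ε h hε
    rw [← inv_smul_eq_iff₀ hε] at h
    rw [← h.2, ← smul_vecMul, vecMul_vecMul, mul_nonsing_inv _ hNdet, vecMul_one]
  have hA : (((v ∘ Sum.inl) ᵥ* Q1.toBlocks₁₂) ᵥ* N⁻¹) ᵥ* Q0.toBlocks₂₁ =
      -((v ∘ Sum.inl) ᵥ* Q1.toBlocks₁₁) := by
    refine tendsto_nhds_unique (hβ.matrix_vecMul tendsto_const_nhds) ?_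
    rw [← hQ1inl]
    refine (hw.precomp Sum.inl).neg.congr' ?_
    filter_upwards [hblocks, hε0] with ε h hε
    rw [smul_vecMul, h.1, smul_smul, mul_neg, inv_mul_cancel₀ hε, neg_smul, one_smul]
  refine ⟨hvT, ?_⟩
  rw [QAmat, vecMul_add, ← vecMul_vecMul, ← vecMul_vecMul, hA, add_neg_cancel]

theorem stationary_of_mapClusterPt {Q : ℝ → Matrix (A ⊕ T) (A ⊕ T) ℝ}
    {Q1 : Matrix (A ⊕ T) (A ⊕ T) ℝ} (habs : ∀ a y, Q 0 (Sum.inl a) y = 0)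
    (hT0 : IsUnit (Q 0).toBlocks₂₂)
    (hD : Tendsto (fun ε => ε⁻¹ • (Q ε - Q 0)) (𝓝[>] 0) (𝓝 Q1))
    {π : ℝ → A ⊕ T → ℝ} (hπ : ∀ᶠ ε in 𝓝[>] 0, π ε ᵥ* Q ε = 0) {v : A ⊕ T → ℝ}
    (hv : MapClusterPt v (𝓝[>] 0) π) :
    v ∘ Sum.inr = 0 ∧ (v ∘ Sum.inl) ᵥ* QAmat (Q 0) Q1 = 0 := by
  obtain ⟨U, hU, hπU⟩ := mapClusterPt_iff_ultrafilter.1 hv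
  refine stationary_of_tendsto_perturbed habs hT0 hU hπU (hD.mono_left hU) ?_
  filter_upwards [hU hπ, hU self_mem_nhdsWithin] with ε h (hε : 0 < ε)
  rwa [smul_smul, mul_inv_cancel₀ hε.ne', one_smul, add_sub_cancel]

theorem exists_tendsto_stationary {Q : ℝ → Matrix (A ⊕ T) (A ⊕ T) ℝ}
    {Q1 : Matrix (A ⊕ T) (A ⊕ T) ℝ} (habs : ∀ a y, Q 0 (Sum.inl a) y = 0)
    (hT0 : IsUnit (Q 0).toBlocks₂₂) (hQA : IsQMatrix (QAmat (Q 0) Q1))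
    (hrec : ∃! C : Set A, IsRecurrentClass (QAmat (Q 0) Q1) C)
    (hD : Tendsto (fun ε => ε⁻¹ • (Q ε - Q 0)) (𝓝[>] 0) (𝓝 Q1)) {π : ℝ → A ⊕ T → ℝ}
    (hπ : ∀ᶠ ε in 𝓝[>] 0, π ε ∈ stdSimplex ℝ (A ⊕ T) ∧ π ε ᵥ* Q ε = 0) :
    ∃ α ∈ stdSimplex ℝ A, α ᵥ* QAmat (Q 0) Q1 = 0 ∧
      Tendsto π (𝓝[>] 0) (𝓝 (Sum.elim α 0)) := by
  have hcluster : ∀ v ∈ stdSimplex ℝ (A ⊕ T), MapClusterPt v (𝓝[>] 0) π →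
      v ∘ Sum.inl ∈ stdSimplex ℝ A ∧ (v ∘ Sum.inl) ᵥ* QAmat (Q 0) Q1 = 0 ∧
        v = Sum.elim (v ∘ Sum.inl) 0 := by
    intro v hv hvπ
    obtain ⟨hvT, hvA⟩ :=
      stationary_of_mapClusterPt habs hT0 hD (hπ.mono fun _ h => h.2) hvπ
    have hv_eq : v = Sum.elim (v ∘ Sum.inl) 0 := by
      rw [← hvT, Sum.elim_comp_inl_inr]
    have hvT' (t : T) : v (Sum.inr t) = 0 := congrFun hvT t
    refine ⟨⟨fun a => hv.1 _, ?_⟩, hvA, hv_eq⟩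
    simpa [Fintype.sum_sum_type, hvT'] using hv.2
  have hK := isCompact_stdSimplex ℝ (A ⊕ T)
  have hmem : ∀ᶠ ε in 𝓝[>] 0, π ε ∈ stdSimplex ℝ (A ⊕ T) := hπ.mono fun _ h => h.1
  obtain ⟨v₀, hv₀, hv₀π⟩ := hK.exists_mapClusterPt (tendsto_principal.2 hmem)
  obtain ⟨hα, hαQ, hv₀_eq⟩ := hcluster v₀ hv₀ hv₀π
  refine ⟨v₀ ∘ Sum.inl, hα, hαQ, hv₀_eq ▸ hK.tendsto_nhds_of_unique_mapClusterPt hmem ?_⟩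
  intro v hv hvπ
  obtain ⟨hvA, hvQ, hv_eq⟩ := hcluster v hv hvπ
  rw [hv_eq, hv₀_eq, hQA.eq_of_vecMul_eq_zero hrec hvQ hαQ (hvA.2.trans hα.2.symm)]

end Perturbation

theorem stmt11_general {A T : Type*} [Fintype A] [Fintype T] [DecidableEq T]
    (ε₀ : ℝ) (hε₀ : 0 < ε₀)
    (Q : ℝ → Matrix (A ⊕ T) (A ⊕ T) ℝ)
    (Qk : ℕ → Matrix (A ⊕ T) (A ⊕ T) ℝ)
    (hseries : ∀ ε : ℝ, 0 ≤ ε → ε < ε₀ → ∀ x y,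
      HasSum (fun k : ℕ => ε ^ k * Qk k x y) (Q ε x y))
    (hQmat : ∀ ε : ℝ, 0 < ε → ε < ε₀ →
      (∀ x y, x ≠ y → 0 ≤ Q ε x y) ∧ ∀ x, ∑ y, Q ε x y = 0)
    (hQ0mat : (∀ x y, x ≠ y → 0 ≤ Q 0 x y) ∧ ∀ x, ∑ y, Q 0 x y = 0)
    (habs : ∀ a : A, ∀ y, Q 0 (Sum.inl a) y = 0)
    (htrans : ∀ t : T, ∃ a : A,
      Relation.ReflTransGen (fun u v => 0 < Q 0 u v) (Sum.inr t) (Sum.inl a))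
    (hT0 : IsUnit (Q 0).toBlocks₂₂)
    (hrec : ∃! C : Set A, IsRecurrentClass (QAmat (Q 0) (Qk 1)) C)
    (π : ℝ → (A ⊕ T) → ℝ)
    (hπ : ∀ ε : ℝ, 0 < ε → ε < ε₀ →
      (∀ x, 0 ≤ π ε x) ∧ (∑ x, π ε x = 1) ∧
      ∀ y, ∑ x, π ε x * Q ε x y = 0) :
    ∃ α : A → ℝ,
      (∀ a : A, Tendsto (fun ε => π ε (Sum.inl a)) (𝓝[>] (0 : ℝ)) (𝓝 (α a))) ∧
      (∀ t : T, Tendsto (fun ε => π ε (Sum.inr t)) (𝓝[>] (0 : ℝ)) (𝓝 0)) ∧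
      (∀ a, 0 ≤ α a) ∧ (∑ a, α a = 1) ∧ α ᵥ* QAmat (Q 0) (Qk 1) = 0 ∧
      ∀ α' : A → ℝ,
        ((∀ a, 0 ≤ α' a) ∧ (∑ a, α' a = 1) ∧ α' ᵥ* QAmat (Q 0) (Qk 1) = 0) → α' = α := by
  have hsmall : ∀ᶠ ε in 𝓝[>] 0, 0 < ε ∧ ε < ε₀ := Ioo_mem_nhdsGT hε₀
  have hD := tendsto_slope_of_hasSum_pow_matrix hε₀ hseries
  have hQA : IsQMatrix (QAmat (Q 0) (Qk 1)) :=
    isQMatrix_QAmat ⟨hQ0mat.1, hQ0mat.2⟩ htrans hT0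
      (fun a y hay => nonneg_of_tendsto_slope
        (hsmall.mono fun ε hε => (hQmat ε hε.1 hε.2).1 _ _ hay) (habs a y) hD)
      (fun a => sum_row_eq_zero_of_tendsto_slope
        (hsmall.mono fun ε hε => (hQmat ε hε.1 hε.2).2 _) (hQ0mat.2 _) hD)
  obtain ⟨α, hα, hαQ, hlim⟩ := exists_tendsto_stationary habs hT0 hQA hrec hD
    (hsmall.mono fun ε hε => ⟨⟨(hπ ε hε.1 hε.2).1, (hπ ε hε.1 hε.2).2.1⟩,
      funext (hπ ε hε.1 hε.2).2.2⟩)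
  exact ⟨α, fun a => tendsto_pi_nhds.1 hlim (Sum.inl a),
    fun t => tendsto_pi_nhds.1 hlim (Sum.inr t), hα.1, hα.2, hαQ,
    fun α' hα' => hQA.eq_of_vecMul_eq_zero hrec hα'.2.2 hαQ (hα'.2.1.trans hα.2.symm)⟩

/-- Under the assumptions that `Q(0)` has absorbing states 𝒜 and transient states 𝒯, and that
the Q-matrix `Q_𝒜 = A₁ + S₁(−T₀)⁻¹R₀` has a single recurrent class, the limit
`π(0) = lim_{ε→0} π(ε)` equals `[α, 0]` where `α` is the unique probability vector on 𝒜
satisfying `α Q_𝒜 = 0`. -/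
theorem stmt11 {A T : Type*} [Fintype A] [Fintype T] [DecidableEq A] [DecidableEq T]
    [Nonempty A] [Nonempty T]
    (ε₀ : ℝ) (hε₀ : 0 < ε₀)
    (Q : ℝ → Matrix (A ⊕ T) (A ⊕ T) ℝ)
    (Qk : ℕ → Matrix (A ⊕ T) (A ⊕ T) ℝ)
    (hseries : ∀ ε : ℝ, 0 ≤ ε → ε < ε₀ → ∀ x y,
      HasSum (fun k : ℕ => ε ^ k * Qk k x y) (Q ε x y))
    (hQ0 : Qk 0 = Q 0)
    (hQmat : ∀ ε : ℝ, 0 < ε → ε < ε₀ →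
      (∀ x y, x ≠ y → 0 ≤ Q ε x y) ∧ ∀ x, ∑ y, Q ε x y = 0)
    (hirr : ∀ ε : ℝ, 0 < ε → ε < ε₀ →
      ∀ x y : A ⊕ T, Relation.ReflTransGen (fun a b => 0 < Q ε a b) x y)
    (hQ0mat : (∀ x y, x ≠ y → 0 ≤ Q 0 x y) ∧ ∀ x, ∑ y, Q 0 x y = 0)
    (habs : ∀ a : A, ∀ y, Q 0 (Sum.inl a) y = 0)
    (htrans : ∀ t : T, ∃ a : A,
      Relation.ReflTransGen (fun u v => 0 < Q 0 u v) (Sum.inr t) (Sum.inl a))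
    (hT0 : IsUnit (Q 0).toBlocks₂₂)
    (hrec : ∃! C : Set A, IsRecurrentClass (QAmat (Q 0) (Qk 1)) C)
    (π : ℝ → (A ⊕ T) → ℝ)
    (hπ : ∀ ε : ℝ, 0 < ε → ε < ε₀ →
      (∀ x, 0 ≤ π ε x) ∧ (∑ x, π ε x = 1) ∧
      ∀ y, ∑ x, π ε x * Q ε x y = 0) :
    ∃ α : A → ℝ,
      (∀ a : A, Tendsto (fun ε => π ε (Sum.inl a)) (𝓝[>] (0 : ℝ)) (𝓝 (α a))) ∧
      (∀ t : T, Tendsto (fun ε => π ε (Sum.inr t)) (𝓝[>] (0 : ℝ)) (𝓝 0)) ∧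
      (∀ a, 0 ≤ α a) ∧ (∑ a, α a = 1) ∧ α ᵥ* QAmat (Q 0) (Qk 1) = 0 ∧
      ∀ α' : A → ℝ,
        ((∀ a, 0 ≤ α' a) ∧ (∑ a, α' a = 1) ∧ α' ᵥ* QAmat (Q 0) (Qk 1) = 0) → α' = α :=
  stmt11_general ε₀ hε₀ Q Qk hseries hQmat hQ0mat habs htrans hT0 hrec π hπ
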